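/- arXiv:1405.4981 — 6 statements merged into one kernel-verified Lean document; each statement's English description precedes it below -/
import Mathlib

section
/- For every stochastic encoder Q with hint sets ℳ₁, ℳ₂, Bob's guessing ambiguity is lower-bounded by A_B^g(Q) ≥ max( (1 + ln|𝒳|)^{−ρ} · 2^{ρ(H_ᾱ(X|Y) − log(|ℳ₁|·|ℳ₂|))}, 1 ). -/
open Real Finset Filter
open scoped Classical

noncomputable section

/-- `G` is a guessing function for `𝒳` given side-information in `W`: for each
side-information value `w`, `x ↦ G x w` is a bijection from `𝒳` onto `{1, …, |𝒳|}`. -/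
def IsGuessing {𝒳 W : Type*} [Fintype 𝒳] (G : 𝒳 → W → ℕ) : Prop :=
  ∀ w : W, (Function.Injective fun x => G x w) ∧
    ∀ x, G x w ∈ Finset.Icc 1 (Fintype.card 𝒳)

/-- `P` is a probability mass function on `𝒳 × 𝒴` (written in curried form). -/
def IsPMF {𝒳 𝒴 : Type*} [Fintype 𝒳] [Fintype 𝒴] (P : 𝒳 → 𝒴 → ℝ) : Prop :=
  (∀ x y, 0 ≤ P x y) ∧ ∑ x, ∑ y, P x y = 1

/-- `Q` is a conditional PMF on `M` given `(x, y)`. -/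
def IsCondPMF {𝒳 𝒴 M : Type*} [Fintype M] (Q : 𝒳 → 𝒴 → M → ℝ) : Prop :=
  ∀ x y, (∀ m, 0 ≤ Q x y m) ∧ ∑ m, Q x y m = 1

/-- Conditional Rényi entropy of order `α` (base-2 logarithms). -/
def condRenyi {𝒳 𝒴 : Type*} [Fintype 𝒳] [Fintype 𝒴] (α : ℝ) (P : 𝒳 → 𝒴 → ℝ) : ℝ :=
  (α / (1 - α)) * Real.logb 2 (∑ y, (∑ x, P x y ^ α) ^ (1 / α))

/-- Bob's guessing ambiguity: the least `ρ`-th guessing moment over guessing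
functions for `X` given `(Y, M₁, M₂)`. -/
def bobGuessAmb {𝒳 𝒴 M₁ M₂ : Type*} [Fintype 𝒳] [Fintype 𝒴] [Fintype M₁] [Fintype M₂]
    (ρ : ℝ) (P : 𝒳 → 𝒴 → ℝ) (Q : 𝒳 → 𝒴 → M₁ × M₂ → ℝ) : ℝ :=
  sInf { e | ∃ G : 𝒳 → 𝒴 × M₁ × M₂ → ℕ, IsGuessing G ∧
    e = ∑ x, ∑ y, ∑ m : M₁ × M₂, P x y * Q x y m * (G x (y, m) : ℝ) ^ ρ }

/-- Eve's ambiguity: the least `ρ`-th moment of the minimum of two guessing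
functions, one for `X` given `(Y, M₁)` and one for `X` given `(Y, M₂)`. -/
def eveAmb {𝒳 𝒴 M₁ M₂ : Type*} [Fintype 𝒳] [Fintype 𝒴] [Fintype M₁] [Fintype M₂]
    (ρ : ℝ) (P : 𝒳 → 𝒴 → ℝ) (Q : 𝒳 → 𝒴 → M₁ × M₂ → ℝ) : ℝ :=
  sInf { e | ∃ G₁ : 𝒳 → 𝒴 × M₁ → ℕ, ∃ G₂ : 𝒳 → 𝒴 × M₂ → ℕ,
    IsGuessing G₁ ∧ IsGuessing G₂ ∧
    e = ∑ x, ∑ y, ∑ m : M₁ × M₂, P x y * Q x y m *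
      ((min (G₁ x (y, m.1)) (G₂ x (y, m.2)) : ℕ) : ℝ) ^ ρ }

/-- Bob's list ambiguity: the `ρ`-th moment of the size of the list of all `x`
with positive posterior probability given `(Y, M₁, M₂)`. -/
def bobListAmb {𝒳 𝒴 M₁ M₂ : Type*} [Fintype 𝒳] [Fintype 𝒴] [Fintype M₁] [Fintype M₂]
    (ρ : ℝ) (P : 𝒳 → 𝒴 → ℝ) (Q : 𝒳 → 𝒴 → M₁ × M₂ → ℝ) : ℝ :=
  ∑ x, ∑ y, ∑ m : M₁ × M₂, P x y * Q x y m *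
    ((Finset.univ.filter fun x' => 0 < P x' y * Q x' y m).card : ℝ) ^ ρ

/-!
For each value `(y, m)` of Bob's side information, Hölder's inequality with weights `1 / G`
and exponent `1 + ρ`, together with `∑ₓ 1 / G(x|y,m) ≤ 1 + ln |𝒳|` (a harmonic sum), gives Arikan's
bound `(∑ₓ p(x,y,m) ^ (1/(1+ρ))) ^ (1+ρ) ≤ (1 + ln |𝒳|) ^ ρ ∑ₓ p(x,y,m) G(x|y,m) ^ ρ`.
Forgetting the hint `m` costs at most a factor `|ℳ| ^ ρ`: `t ↦ t ^ (1/(1+ρ))` is subadditive and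
the power-mean inequality gives `(∑ₘ aₘ) ^ (1+ρ) ≤ |ℳ| ^ ρ ∑ₘ aₘ ^ (1+ρ)`. Summing over `y`
yields `2 ^ (ρ H_ᾱ(X|Y)) ≤ (|ℳ| (1 + ln |𝒳|)) ^ ρ E[G ^ ρ]`; the bound `1` holds since `G ≥ 1`.
-/

theorem Real.rpow_sum_le_sum_rpow {ι : Type*} (s : Finset ι) {f : ι → ℝ} (hf : ∀ i, 0 ≤ f i)
    {p : ℝ} (hp : 0 < p) (hp1 : p ≤ 1) :
    (∑ i ∈ s, f i) ^ p ≤ ∑ i ∈ s, f i ^ p := by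
  induction s using Finset.cons_induction with
  | empty => simp [zero_rpow hp.ne']
  | cons a s ha ih =>
    rw [sum_cons, sum_cons]
    exact (rpow_add_le_add_rpow (hf a) (sum_nonneg fun i _ => hf i) hp.le hp1).trans
      (add_le_add_right ih _)

theorem sum_inv_le_one_add_log {ι : Type*} [Fintype ι] {g : ι → ℕ} {n : ℕ}
    (hg : Function.Injective g) (hmem : ∀ i, g i ∈ Icc 1 n) :
    ∑ i, ((g i : ℝ))⁻¹ ≤ 1 + Real.log n := by
  calc ∑ i, ((g i : ℝ))⁻¹ = ∑ k ∈ univ.image g, ((k : ℝ))⁻¹ :=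
        (sum_image (f := fun k : ℕ => ((k : ℝ))⁻¹) fun _ _ _ _ h => hg h).symm
    _ ≤ ∑ k ∈ Icc 1 n, ((k : ℝ))⁻¹ :=
        sum_le_sum_of_subset_of_nonneg (image_subset_iff.mpr fun i _ => hmem i)
          fun _ _ _ => by positivity
    _ = harmonic n := by simp [harmonic_eq_sum_Icc]
    _ ≤ 1 + Real.log n := harmonic_le_one_add_log n

theorem rpow_sum_rpow_le_sum_inv_mul {ι : Type*} (s : Finset ι) {ρ : ℝ} (hρ : 0 ≤ ρ)
    {c w : ι → ℝ} (hc : ∀ i, 0 ≤ c i) (hw : ∀ i, 0 < w i) :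
    (∑ i ∈ s, c i ^ (1 / (1 + ρ))) ^ (1 + ρ) ≤
      (∑ i ∈ s, (w i)⁻¹) ^ ρ * ∑ i ∈ s, c i * w i ^ ρ := by
  have h1ρ : 0 < 1 + ρ := by linarith
  have hholder := inner_le_weight_mul_Lp_of_nonneg s (by linarith : 1 ≤ 1 + ρ)
    (fun i => (w i)⁻¹) (fun i => c i ^ (1 / (1 + ρ)) * w i)
    (fun i => (inv_pos.mpr (hw i)).le) (fun i => by have := hc i; have := hw i; positivity)
  have hlhs : ∀ i, (w i)⁻¹ * (c i ^ (1 / (1 + ρ)) * w i) = c i ^ (1 / (1 + ρ)) := fun i => by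
    field_simp [(hw i).ne']
  have hrhs : ∀ i, (w i)⁻¹ * (c i ^ (1 / (1 + ρ)) * w i) ^ (1 + ρ) = c i * w i ^ ρ := fun i => by
    rw [mul_rpow (rpow_nonneg (hc i) _) (hw i).le, ← rpow_mul (hc i),
      one_div_mul_cancel h1ρ.ne', rpow_one, rpow_add (hw i), rpow_one]
    field_simp [(hw i).ne']
  simp only [hlhs, hrhs] at hholder
  have hB : 0 ≤ ∑ i ∈ s, (w i)⁻¹ := sum_nonneg fun i _ => (inv_pos.mpr (hw i)).le
  have hA : 0 ≤ ∑ i ∈ s, c i * w i ^ ρ :=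
    sum_nonneg fun i _ => mul_nonneg (hc i) (rpow_nonneg (hw i).le _)
  calc (∑ i ∈ s, c i ^ (1 / (1 + ρ))) ^ (1 + ρ)
      ≤ ((∑ i ∈ s, (w i)⁻¹) ^ (1 - (1 + ρ)⁻¹) *
          (∑ i ∈ s, c i * w i ^ ρ) ^ (1 + ρ)⁻¹) ^ (1 + ρ) :=
        rpow_le_rpow (sum_nonneg fun i _ => rpow_nonneg (hc i) _) hholder h1ρ.le
    _ = (∑ i ∈ s, (w i)⁻¹) ^ ρ * ∑ i ∈ s, c i * w i ^ ρ := by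
        rw [mul_rpow (rpow_nonneg hB _) (rpow_nonneg hA _), ← rpow_mul hB, ← rpow_mul hA,
          inv_mul_cancel₀ h1ρ.ne', rpow_one, sub_mul, inv_mul_cancel₀ h1ρ.ne', one_mul,
          add_sub_cancel_left]

theorem arikan_bound {ι : Type*} [Fintype ι] {ρ : ℝ} (hρ : 0 ≤ ρ) {c : ι → ℝ}
    (hc : ∀ i, 0 ≤ c i) {g : ι → ℕ} (hg : Function.Injective g)
    (hmem : ∀ i, g i ∈ Icc 1 (Fintype.card ι)) :
    (∑ i, c i ^ (1 / (1 + ρ))) ^ (1 + ρ) ≤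
      (1 + Real.log (Fintype.card ι)) ^ ρ * ∑ i, c i * (g i : ℝ) ^ ρ := by
  have hg_pos : ∀ i, (0 : ℝ) < g i := fun i => by
    exact_mod_cast (mem_Icc.mp (hmem i)).1
  refine (rpow_sum_rpow_le_sum_inv_mul univ hρ hc hg_pos).trans ?_
  gcongr
  · exact sum_nonneg fun i _ => mul_nonneg (hc i) (rpow_nonneg (hg_pos i).le _)
  · exact sum_inv_le_one_add_log hg hmem

theorem rpow_sum_sum_rpow_le_card_mul {ι M : Type*} [Fintype ι] [Fintype M] {ρ : ℝ}
    (hρ : 0 ≤ ρ) {a : ι → M → ℝ} (ha : ∀ i m, 0 ≤ a i m) :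
    (∑ i, (∑ m, a i m) ^ (1 / (1 + ρ))) ^ (1 + ρ) ≤
      (Fintype.card M : ℝ) ^ ρ * ∑ m, (∑ i, a i m ^ (1 / (1 + ρ))) ^ (1 + ρ) := by
  have h1ρ : 1 ≤ 1 + ρ := by linarith
  have hα : 0 < 1 / (1 + ρ) := by positivity
  calc (∑ i, (∑ m, a i m) ^ (1 / (1 + ρ))) ^ (1 + ρ)
      ≤ (∑ m, ∑ i, a i m ^ (1 / (1 + ρ))) ^ (1 + ρ) := by
        rw [sum_comm]
        gcongr with i
        · exact sum_nonneg fun i _ => rpow_nonneg (sum_nonneg fun m _ => ha i m) _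
        · exact Real.rpow_sum_le_sum_rpow univ (ha i) hα ((div_le_one (by linarith)).mpr h1ρ)
    _ ≤ (Fintype.card M : ℝ) ^ ρ * ∑ m, (∑ i, a i m ^ (1 / (1 + ρ))) ^ (1 + ρ) := by
        simpa only [card_univ, add_sub_cancel_left] using
          rpow_sum_le_const_mul_sum_rpow_of_nonneg (s := univ) h1ρ
            fun m _ => sum_nonneg fun i _ => rpow_nonneg (ha i m) _

theorem IsGuessing.one_le {𝒳 W : Type*} [Fintype 𝒳] {G : 𝒳 → W → ℕ} (hG : IsGuessing G)
    (x : 𝒳) (w : W) : (1 : ℝ) ≤ G x w := by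
  exact_mod_cast (mem_Icc.mp ((hG w).2 x)).1

theorem exists_isGuessing (𝒳 W : Type*) [Fintype 𝒳] : ∃ G : 𝒳 → W → ℕ, IsGuessing G :=
  ⟨fun x _ => Fintype.equivFin 𝒳 x + 1, fun _ =>
    ⟨fun _ _ h => (Fintype.equivFin 𝒳).injective (Fin.val_injective (Nat.succ_injective h)),
      fun x => mem_Icc.mpr ⟨Nat.le_add_left 1 _, (Fintype.equivFin 𝒳 x).is_lt⟩⟩⟩

theorem IsCondPMF.sum_mul {𝒳 𝒴 M : Type*} [Fintype M] {Q : 𝒳 → 𝒴 → M → ℝ}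
    (hQ : IsCondPMF Q) (a : ℝ) (x : 𝒳) (y : 𝒴) : ∑ m, a * Q x y m = a := by
  rw [← mul_sum, (hQ x y).2, mul_one]

section GuessMoment

variable {𝒳 𝒴 M : Type*} [Fintype 𝒳] [Fintype 𝒴] [Fintype M]

def guessMoment (ρ : ℝ) (P : 𝒳 → 𝒴 → ℝ) (Q : 𝒳 → 𝒴 → M → ℝ) (G : 𝒳 → 𝒴 × M → ℕ) : ℝ :=
  ∑ x, ∑ y, ∑ m, P x y * Q x y m * (G x (y, m) : ℝ) ^ ρ

def condRenyiPowSum (ρ : ℝ) (P : 𝒳 → 𝒴 → ℝ) : ℝ :=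
  ∑ y, (∑ x, P x y ^ (1 / (1 + ρ))) ^ (1 + ρ)

theorem two_rpow_mul_condRenyi {ρ : ℝ} (hρ : 0 < ρ) {P : 𝒳 → 𝒴 → ℝ}
    (hS : 0 < condRenyiPowSum ρ P) :
    (2 : ℝ) ^ (ρ * condRenyi (1 / (1 + ρ)) P) = condRenyiPowSum ρ P := by
  have hcoef : ρ * (1 / (1 + ρ) / (1 - 1 / (1 + ρ))) = 1 := by
    field_simp
    rw [add_sub_cancel_left, div_self hρ.ne']
  rw [condRenyi, one_div_one_div, ← mul_assoc, hcoef, one_mul]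
  exact rpow_logb two_pos (by norm_num) hS

theorem condRenyiPowSum_pos {ρ : ℝ} {P : 𝒳 → 𝒴 → ℝ} (hP : IsPMF P) :
    0 < condRenyiPowSum ρ P := by
  have hsum : 0 < ∑ x, ∑ y, P x y := hP.2 ▸ one_pos
  obtain ⟨x, -, hx⟩ : ∃ x ∈ univ, (0 : ℝ) < ∑ y, P x y :=
    exists_lt_of_sum_lt (by simpa using hsum)
  obtain ⟨y, -, hxy⟩ : ∃ y ∈ univ, 0 < P x y := exists_lt_of_sum_lt (by simpa using hx)
  refine sum_pos' (fun y _ => ?_) ⟨y, mem_univ y, rpow_pos_of_pos ?_ _⟩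
  · exact rpow_nonneg (sum_nonneg fun x _ => rpow_nonneg (hP.1 x y) _) _
  · exact sum_pos' (fun x _ => rpow_nonneg (hP.1 x y) _) ⟨x, mem_univ x, rpow_pos_of_pos hxy _⟩

theorem one_le_guessMoment {ρ : ℝ} (hρ : 0 ≤ ρ) {P : 𝒳 → 𝒴 → ℝ} (hP : IsPMF P)
    {Q : 𝒳 → 𝒴 → M → ℝ} (hQ : IsCondPMF Q) {G : 𝒳 → 𝒴 × M → ℕ} (hG : IsGuessing G) :
    1 ≤ guessMoment ρ P Q G := by
  calc (1 : ℝ) = ∑ x, ∑ y, ∑ m, P x y * Q x y m := by simp only [hQ.sum_mul, hP.2]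
    _ ≤ guessMoment ρ P Q G :=
        sum_le_sum fun x _ => sum_le_sum fun y _ => sum_le_sum fun m _ =>
          le_mul_of_one_le_right (mul_nonneg (hP.1 x y) ((hQ x y).1 m))
            (one_le_rpow (hG.one_le x (y, m)) hρ)

theorem condRenyiPowSum_le_guessMoment {ρ : ℝ} (hρ : 0 ≤ ρ) {P : 𝒳 → 𝒴 → ℝ}
    (hP : ∀ x y, 0 ≤ P x y) {Q : 𝒳 → 𝒴 → M → ℝ} (hQ : IsCondPMF Q)
    {G : 𝒳 → 𝒴 × M → ℕ} (hG : IsGuessing G) :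
    condRenyiPowSum ρ P ≤
      (Fintype.card M : ℝ) ^ ρ * ((1 + Real.log (Fintype.card 𝒳)) ^ ρ * guessMoment ρ P Q G) := by
  have hPQ : ∀ x y m, 0 ≤ P x y * Q x y m := fun x y m => mul_nonneg (hP x y) ((hQ x y).1 m)
  calc condRenyiPowSum ρ P
      = ∑ y, (∑ x, (∑ m, P x y * Q x y m) ^ (1 / (1 + ρ))) ^ (1 + ρ) := by
        simp only [condRenyiPowSum, hQ.sum_mul]
    _ ≤ ∑ y, (Fintype.card M : ℝ) ^ ρ *
          ∑ m, (∑ x, (P x y * Q x y m) ^ (1 / (1 + ρ))) ^ (1 + ρ) :=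
        sum_le_sum fun y _ => rpow_sum_sum_rpow_le_card_mul hρ fun x m => hPQ x y m
    _ ≤ ∑ y, (Fintype.card M : ℝ) ^ ρ * ∑ m, (1 + Real.log (Fintype.card 𝒳)) ^ ρ *
          ∑ x, P x y * Q x y m * (G x (y, m) : ℝ) ^ ρ := by
        gcongr with y _ m _
        exact arikan_bound hρ (fun x => hPQ x y m) (hG (y, m)).1 (hG (y, m)).2
    _ = (Fintype.card M : ℝ) ^ ρ * ((1 + Real.log (Fintype.card 𝒳)) ^ ρ * guessMoment ρ P Q G) := by
        simp only [guessMoment, mul_sum]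
        exact (sum_comm.trans (sum_congr rfl fun y _ => sum_comm)).symm

end GuessMoment

theorem le_bobGuessAmb {𝒳 𝒴 M₁ M₂ : Type*} [Fintype 𝒳] [Fintype 𝒴] [Fintype M₁] [Fintype M₂]
    {ρ : ℝ} {P : 𝒳 → 𝒴 → ℝ} {Q : 𝒳 → 𝒴 → M₁ × M₂ → ℝ} {b : ℝ}
    (h : ∀ G, IsGuessing G → b ≤ guessMoment ρ P Q G) : b ≤ bobGuessAmb ρ P Q :=
  le_csInf ((exists_isGuessing 𝒳 (𝒴 × M₁ × M₂)).elim fun G hG => ⟨_, G, hG, rfl⟩)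
    (by rintro _ ⟨G, hG, rfl⟩; exact h G hG)

theorem finite_blocklength_guessing_converse_bob_general
    {𝒳 𝒴 M₁ M₂ : Type*} [Fintype 𝒳] [Fintype 𝒴] [Fintype M₁] [Fintype M₂]
    [Nonempty M₁] [Nonempty M₂]
    (ρ : ℝ) (hρ : 0 < ρ) (P : 𝒳 → 𝒴 → ℝ) (hP : IsPMF P)
    (Q : 𝒳 → 𝒴 → M₁ × M₂ → ℝ) (hQ : IsCondPMF Q) :
    max ((1 + Real.log (Fintype.card 𝒳)) ^ (-ρ) *
        2 ^ (ρ * (condRenyi (1 / (1 + ρ)) P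
          - Real.logb 2 ((Fintype.card M₁ : ℝ) * Fintype.card M₂)))) 1 ≤
      bobGuessAmb ρ P Q := by
  have hN : 0 < (Fintype.card M₁ : ℝ) * Fintype.card M₂ := by positivity
  have hL : 0 < 1 + Real.log (Fintype.card 𝒳) := by
    linarith [Real.log_natCast_nonneg (Fintype.card 𝒳)]
  refine le_bobGuessAmb fun G hG => max_le ?_ (one_le_guessMoment hρ.le hP hQ hG)
  rw [mul_sub, rpow_sub two_pos, two_rpow_mul_condRenyi hρ (condRenyiPowSum_pos hP), mul_comm ρ,
    rpow_mul zero_le_two, rpow_logb two_pos (by norm_num) hN, rpow_neg hL.le,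
    inv_mul_le_iff₀ (rpow_pos_of_pos hL ρ), div_le_iff₀ (rpow_pos_of_pos hN ρ)]
  calc condRenyiPowSum ρ P
      ≤ (Fintype.card (M₁ × M₂) : ℝ) ^ ρ *
          ((1 + Real.log (Fintype.card 𝒳)) ^ ρ * guessMoment ρ P Q G) :=
        condRenyiPowSum_le_guessMoment hρ.le hP.1 hQ hG
    _ = _ := by rw [Fintype.card_prod, Nat.cast_mul, mul_comm]

theorem finite_blocklength_guessing_converse_bob
    {𝒳 𝒴 M₁ M₂ : Type*} [Fintype 𝒳] [Fintype 𝒴] [Fintype M₁] [Fintype M₂]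
    [Nonempty 𝒳] [Nonempty 𝒴] [Nonempty M₁] [Nonempty M₂]
    (ρ : ℝ) (hρ : 0 < ρ) (P : 𝒳 → 𝒴 → ℝ) (hP : IsPMF P)
    (Q : 𝒳 → 𝒴 → M₁ × M₂ → ℝ) (hQ : IsCondPMF Q) :
    max ((1 + Real.log (Fintype.card 𝒳)) ^ (-ρ) *
        2 ^ (ρ * (condRenyi (1 / (1 + ρ)) P
          - Real.logb 2 ((Fintype.card M₁ : ℝ) * Fintype.card M₂)))) 1 ≤
      bobGuessAmb ρ P Q :=
  finite_blocklength_guessing_converse_bob_general ρ hρ P hP Q hQ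
end
end

section
/- For every stochastic task-encoder, i.e., every conditional PMF Q(m|x,y) on a finite nonempty set ℳ, there exists a guessing function G for X given Y such that E[G(X|Y)^ρ] ≤ |ℳ|^ρ · E[|L^Y_M|^ρ], where the expectations are with respect to the joint law P(x,y)Q(m|x,y) and L^y_m = {x ∈ 𝒳 : P(x,y)Q(m|x,y) > 0}. -/
open Real Finset Filter
open scoped Classical

noncomputable section

/-! Guess `x` in increasing order of the size of the smallest list `L^y_m` that contains it
(with `P(x,y) Q(m|x,y) > 0`). Everything guessed up to `x` then lies in some list no larger than
any list `L^y_m` containing `x`; there are at most `|ℳ|` such lists, so `G(x|y) ≤ |ℳ| |L^y_m|`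
on the support of `P Q`. Raising this to the power `ρ` and averaging over `Q` gives the bound. -/

section Ranking

variable {α β : Type*} [Fintype α] [LinearOrder β]

lemma injective_card_filter_le_of_injective {key : α → β} (hkey : Function.Injective key) :
    Function.Injective fun a => #{a' | key a' ≤ key a} := by
  have hmono : ∀ {a b}, key a < key b → #{a' | key a' ≤ key a} < #{a' | key a' ≤ key b} := by
    intro a b hab
    refine Finset.card_lt_card ((Finset.ssubset_iff_of_subset ?_).mpr ⟨b, by simp, by simp [hab]⟩)
    intro a' ha'
    simp only [Finset.mem_filter_univ] at ha' ⊢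
    exact ha'.trans hab.le
  intro a b hab
  by_contra hne
  rcases lt_or_gt_of_ne (hkey.ne hne) with hlt | hgt
  · exact (hmono hlt).ne hab
  · exact (hmono hgt).ne' hab

lemma exists_injective_rank_le_card_filter_le (f : α → β) :
    ∃ g : α → ℕ, Function.Injective g ∧ (∀ a, g a ∈ Icc 1 (Fintype.card α)) ∧
      ∀ a, g a ≤ #{a' | f a' ≤ f a} := by
  let key : α → β ×ₗ Fin (Fintype.card α) := fun a => toLex (f a, Fintype.equivFin α a)
  have hkey : Function.Injective key := fun a b h =>
    (Fintype.equivFin α).injective (congrArg (fun p => (ofLex p).2) h)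
  refine ⟨fun a => #{a' | key a' ≤ key a}, injective_card_filter_le_of_injective hkey,
    fun a => Finset.mem_Icc.mpr ⟨Finset.card_pos.mpr ⟨a, by simp⟩, card_le_univ _⟩,
    fun a => Finset.card_le_card fun a' ha' => ?_⟩
  simp only [Finset.mem_filter_univ] at ha' ⊢
  exact (Prod.Lex.le_iff.mp ha').elim le_of_lt fun h => h.1.le

end Ranking

section MinListCard

variable {M : Type*} [Fintype M]

/-- The size of a smallest list `L m` containing `a`, or `⊤` if there is none. -/
def minListCard {α : Type*} (L : M → Finset α) (a : α) : WithTop ℕ :=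
  ({m | a ∈ L m} : Finset M).inf fun m => (#(L m) : WithTop ℕ)

lemma minListCard_le {α : Type*} {L : M → Finset α} {a : α} {m : M} (h : a ∈ L m) :
    minListCard L a ≤ #(L m) :=
  Finset.inf_le (by simpa using h)

lemma card_filter_minListCard_le {α : Type*} [Fintype α] (L : M → Finset α) (n : ℕ) :
    #{a | minListCard L a ≤ n} ≤ Fintype.card M * n := by
  have hcover :
      ({a | minListCard L a ≤ n} : Finset α) ⊆ ({m | #(L m) ≤ n} : Finset M).biUnion L := by
    intro a ha
    obtain ⟨m, hm, hle⟩ :=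
      (Finset.inf_le_iff (WithTop.coe_lt_top n)).mp ((Finset.mem_filter_univ a).mp ha)
    exact Finset.mem_biUnion.mpr ⟨m, by simpa using hle, (Finset.mem_filter_univ m).mp hm⟩
  calc #{a | minListCard L a ≤ n}
      ≤ ∑ m ∈ ({m | #(L m) ≤ n} : Finset M), #(L m) :=
        (Finset.card_le_card hcover).trans Finset.card_biUnion_le
    _ ≤ ∑ _m ∈ ({m | #(L m) ≤ n} : Finset M), n := Finset.sum_le_sum fun m hm => by simpa using hm
    _ ≤ Fintype.card M * n := by
        rw [Finset.sum_const, smul_eq_mul]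
        exact Nat.mul_le_mul_right _ (card_le_univ _)

end MinListCard

lemma exists_isGuessing_le_card_mul_card {𝒳 W M : Type*} [Fintype 𝒳] [Fintype M]
    (L : W → M → Finset 𝒳) :
    ∃ G : 𝒳 → W → ℕ, IsGuessing G ∧
      ∀ x w m, x ∈ L w m → G x w ≤ Fintype.card M * #(L w m) := by
  choose G hinj hrange hle using
    fun w => exists_injective_rank_le_card_filter_le (minListCard (L w))
  refine ⟨fun x w => G w x, fun w => ⟨hinj w, hrange w⟩, fun x w m hx => ?_⟩
  calc G w x ≤ #{x' | minListCard (L w) x' ≤ minListCard (L w) x} := hle w x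
    _ ≤ #{x' | minListCard (L w) x' ≤ #(L w m)} :=
        Finset.card_le_card fun x' hx' => by
          simp only [Finset.mem_filter_univ] at hx' ⊢
          exact hx'.trans (minListCard_le hx)
    _ ≤ Fintype.card M * #(L w m) := card_filter_minListCard_le (L w) _

lemma sum_mul_rpow_le_of_le_on_support {𝒳 𝒴 M : Type*} [Fintype 𝒳] [Fintype 𝒴] [Fintype M]
    {ρ : ℝ} (hρ : 0 ≤ ρ) {P : 𝒳 → 𝒴 → ℝ} (hP : ∀ x y, 0 ≤ P x y) {Q : 𝒳 → 𝒴 → M → ℝ}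
    (hQ : IsCondPMF Q) {G : 𝒳 → 𝒴 → ℕ} {c : ℝ} (hc : 0 ≤ c) {ℓ : 𝒴 → M → ℕ}
    (hG : ∀ x y m, 0 < P x y * Q x y m → (G x y : ℝ) ≤ c * ℓ y m) :
    ∑ x, ∑ y, P x y * (G x y : ℝ) ^ ρ ≤
      c ^ ρ * ∑ x, ∑ y, ∑ m, P x y * Q x y m * (ℓ y m : ℝ) ^ ρ := by
  have hsplit : ∀ x y, P x y * (G x y : ℝ) ^ ρ = ∑ m, P x y * Q x y m * (G x y : ℝ) ^ ρ := by
    intro x y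
    rw [← Finset.sum_mul, ← Finset.mul_sum, (hQ x y).2, mul_one]
  simp only [hsplit, Finset.mul_sum]
  refine Finset.sum_le_sum fun x _ => Finset.sum_le_sum fun y _ => Finset.sum_le_sum fun m _ => ?_
  have hPQ : 0 ≤ P x y * Q x y m := mul_nonneg (hP x y) ((hQ x y).1 m)
  rcases hPQ.eq_or_lt with hzero | hpos
  · simp [← hzero]
  · calc P x y * Q x y m * (G x y : ℝ) ^ ρ
        ≤ P x y * Q x y m * (c * ℓ y m) ^ ρ :=
          mul_le_mul_of_nonneg_left (Real.rpow_le_rpow (by positivity) (hG x y m hpos) hρ) hPQ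
      _ = c ^ ρ * (P x y * Q x y m * (ℓ y m : ℝ) ^ ρ) := by
          rw [Real.mul_rpow hc (Nat.cast_nonneg _)]
          ring

theorem taskEncoder_induces_guessing_general
    {𝒳 𝒴 M : Type*} [Fintype 𝒳] [Fintype 𝒴] [Fintype M]
    (ρ : ℝ) (hρ : 0 < ρ) (P : 𝒳 → 𝒴 → ℝ) (hP : IsPMF P)
    (Q : 𝒳 → 𝒴 → M → ℝ) (hQ : IsCondPMF Q) :
    ∃ G : 𝒳 → 𝒴 → ℕ, IsGuessing G ∧
      ∑ x, ∑ y, P x y * (G x y : ℝ) ^ ρ ≤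
        (Fintype.card M : ℝ) ^ ρ *
          ∑ x, ∑ y, ∑ m, P x y * Q x y m *
            ((Finset.univ.filter fun x' => 0 < P x' y * Q x' y m).card : ℝ) ^ ρ := by
  obtain ⟨G, hGuess, hG⟩ :=
    exists_isGuessing_le_card_mul_card fun y m => ({x' | 0 < P x' y * Q x' y m} : Finset 𝒳)
  refine ⟨G, hGuess, sum_mul_rpow_le_of_le_on_support hρ.le hP.1 hQ (Nat.cast_nonneg _) ?_⟩
  intro x y m hpos
  exact_mod_cast hG x y m ((Finset.mem_filter_univ x).mpr hpos)

theorem taskEncoder_induces_guessing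
    {𝒳 𝒴 M : Type*} [Fintype 𝒳] [Fintype 𝒴] [Fintype M]
    [Nonempty 𝒳] [Nonempty 𝒴] [Nonempty M]
    (ρ : ℝ) (hρ : 0 < ρ) (P : 𝒳 → 𝒴 → ℝ) (hP : IsPMF P)
    (Q : 𝒳 → 𝒴 → M → ℝ) (hQ : IsCondPMF Q) :
    ∃ G : 𝒳 → 𝒴 → ℕ, IsGuessing G ∧
      ∑ x, ∑ y, P x y * (G x y : ℝ) ^ ρ ≤
        (Fintype.card M : ℝ) ^ ρ *
          ∑ x, ∑ y, ∑ m, P x y * Q x y m *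
            ((Finset.univ.filter fun x' => 0 < P x' y * Q x' y m).card : ℝ) ^ ρ :=
  taskEncoder_induces_guessing_general ρ hρ P hP Q hQ
end
end

section
/- Let G be a guessing function for X given Y, let v be a positive integer with v ≤ |𝒳|, and let ℳ be a finite set with |ℳ| ≥ v·(⌊log⌈|𝒳|/v⌉⌋ + 1). Then there exists a deterministic task-encoder, i.e., a function f : 𝒳×𝒴 → ℳ (equivalently a 0-1 valued conditional PMF Q(m|x,y)), whose lists satisfy E[|L^Y_M|^ρ] ≤ E[⌈G(X|Y)/v⌉^ρ]. -/
open Real Finset Filter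
open scoped Classical

noncomputable section

/-!
Cut the guessing order for `X` given `y` into blocks of `v` consecutive guesses, so that the
zero-based rank `n = G(x|y) - 1` lies in block `q = n / v`, and `q + 1 = ⌈G(x|y) / v⌉`. Describe
`x` by its position `n % v` in its block together with the dyadic scale `⌊log₂ (q + 1)⌋`; there are
at most `v · (⌊log ⌈|𝒳| / v⌉⌋ + 1)` such descriptions. Given `y` and the description `(r, k)`,
the candidates share `r`, hence have distinct block indices `q` with `q + 1 ∈ [2 ^ k, 2 ^ (k + 1))`,
so the list has at most `2 ^ k ≤ ⌈G(x|y) / v⌉` elements.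
-/

def blockCode (v n : ℕ) : ℕ × ℕ := (n % v, Nat.log 2 (n / v + 1))

theorem blockCode_snd_lt {v n N : ℕ} (hv : 0 < v) (hn : n < N) :
    (blockCode v n).2 < Nat.log 2 ((N + v - 1) / v) + 1 := by
  refine Nat.lt_succ_of_le (Nat.log_mono_right (b := 2) ?_)
  calc n / v + 1 = (n + v) / v := (Nat.add_div_right n hv).symm
    _ ≤ (N + v - 1) / v := Nat.div_le_div_right (by omega)

theorem card_filter_blockCode_eq_le {α : Type*} [Fintype α] (v : ℕ) {n : α → ℕ}
    (hn : Function.Injective n) (b : α) :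
    #{a | blockCode v (n a) = blockCode v (n b)} ≤ n b / v + 1 := by
  set k := Nat.log 2 (n b / v + 1)
  have hmaps : ∀ a ∈ ({a | blockCode v (n a) = blockCode v (n b)} : Finset α),
      n a / v + 1 ∈ Ico (2 ^ k) (2 ^ (k + 1)) := by
    intro a ha
    simp only [mem_filter, mem_univ, true_and, blockCode, Prod.mk.injEq] at ha
    rw [mem_Ico, show k = Nat.log 2 (n a / v + 1) from ha.2.symm]
    exact ⟨Nat.pow_log_le_self 2 (Nat.succ_ne_zero _), Nat.lt_pow_succ_log_self one_lt_two _⟩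
  have hinj : Set.InjOn (fun a => n a / v + 1)
      ({a | blockCode v (n a) = blockCode v (n b)} : Finset α) := by
    intro a₁ h₁ a₂ h₂ hq
    simp only [coe_filter, mem_univ, true_and, Set.mem_ofPred_eq, blockCode,
      Prod.mk.injEq] at h₁ h₂
    refine hn ?_
    rw [← Nat.div_add_mod (n a₁) v, ← Nat.div_add_mod (n a₂) v, h₁.1, h₂.1,
      Nat.add_right_cancel hq]
  calc #{a | blockCode v (n a) = blockCode v (n b)}
      ≤ #(Ico (2 ^ k) (2 ^ (k + 1))) := card_le_card_of_injOn _ hmaps hinj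
    _ = 2 ^ k := by rw [Nat.card_Ico, pow_succ]; omega
    _ ≤ n b / v + 1 := Nat.pow_log_le_self 2 (Nat.succ_ne_zero _)

theorem div_add_one_le_ceil_div {v : ℕ} (hv : 0 < v) (n : ℕ) :
    ((n / v + 1 : ℕ) : ℝ) ≤ ⌈((n + 1 : ℕ) : ℝ) / v⌉ := by
  have hvR : (0 : ℝ) < v := Nat.cast_pos.mpr hv
  have hlt : n / v * v < n + 1 := (Nat.div_mul_le_self n v).trans_lt n.lt_succ_self
  have : ((n / v + 1 : ℕ) : ℤ) ≤ ⌈((n + 1 : ℕ) : ℝ) / v⌉ := by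
    rw [Nat.cast_succ, Int.add_one_le_iff, Int.lt_ceil, lt_div_iff₀ hvR]
    exact_mod_cast hlt
  calc ((n / v + 1 : ℕ) : ℝ) = (((n / v + 1 : ℕ) : ℤ) : ℝ) := (Int.cast_natCast _).symm
    _ ≤ _ := Int.cast_le.mpr this

theorem IsGuessing.injective_sub_one {𝒳 W : Type*} [Fintype 𝒳] {G : 𝒳 → W → ℕ}
    (hG : IsGuessing G) (w : W) : Function.Injective fun x => G x w - 1 := by
  intro x₁ x₂ h
  have h₁ := (mem_Icc.mp ((hG w).2 x₁)).1
  have h₂ := (mem_Icc.mp ((hG w).2 x₂)).1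
  exact (hG w).1 (show G x₁ w = G x₂ w by simp only at h; omega)

theorem IsGuessing.sub_one_lt_card {𝒳 W : Type*} [Fintype 𝒳] {G : 𝒳 → W → ℕ}
    (hG : IsGuessing G) (x : 𝒳) (w : W) : G x w - 1 < Fintype.card 𝒳 := by
  have := mem_Icc.mp ((hG w).2 x)
  omega

theorem IsGuessing.sub_one_add_one {𝒳 W : Type*} [Fintype 𝒳] {G : 𝒳 → W → ℕ}
    (hG : IsGuessing G) (x : 𝒳) (w : W) : G x w - 1 + 1 = G x w :=
  Nat.sub_add_cancel (mem_Icc.mp ((hG w).2 x)).1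

theorem guessing_induces_taskEncoder_general
    {𝒳 𝒴 M : Type*} [Fintype 𝒳] [Fintype 𝒴] [Fintype M]
    (ρ : ℝ) (hρ : 0 < ρ) (P : 𝒳 → 𝒴 → ℝ) (hP : IsPMF P)
    (G : 𝒳 → 𝒴 → ℕ) (hG : IsGuessing G)
    (v : ℕ) (hv : 0 < v)
    (hM : v * (Nat.log 2 ((Fintype.card 𝒳 + v - 1) / v) + 1) ≤ Fintype.card M) :
    ∃ f : 𝒳 × 𝒴 → M,
      ∑ x, ∑ y, P x y *
          ((Finset.univ.filter fun x' => 0 < P x' y ∧ f (x', y) = f (x, y)).card : ℝ) ^ ρ ≤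
        ∑ x, ∑ y, P x y * ((⌈(G x y : ℝ) / (v : ℝ)⌉ : ℝ)) ^ ρ := by
  set L := Nat.log 2 ((Fintype.card 𝒳 + v - 1) / v) + 1
  obtain ⟨ι⟩ : Nonempty (Fin v × Fin L ↪ M) :=
    Function.Embedding.nonempty_of_card_le (by simpa using hM)
  let code (x : 𝒳) (y : 𝒴) : Fin v × Fin L :=
    (⟨(blockCode v (G x y - 1)).1, Nat.mod_lt _ hv⟩,
      ⟨(blockCode v (G x y - 1)).2, blockCode_snd_lt hv (hG.sub_one_lt_card x y)⟩)
  refine ⟨fun p => ι (code p.1 p.2), ?_⟩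
  gcongr with x _ y _
  · exact hP.1 x y
  calc (#{x' | 0 < P x' y ∧ ι (code x' y) = ι (code x y)} : ℝ)
      ≤ #{x' | blockCode v (G x' y - 1) = blockCode v (G x y - 1)} := by
        gcongr with x' _
        intro ⟨_, hcode⟩
        simpa [code, Prod.ext_iff, Fin.ext_iff] using ι.injective hcode
    _ ≤ ((G x y - 1) / v + 1 : ℕ) := by
        exact_mod_cast card_filter_blockCode_eq_le v (hG.injective_sub_one y) x
    _ ≤ ⌈(G x y : ℝ) / v⌉ := by
        simpa only [hG.sub_one_add_one] using div_add_one_le_ceil_div hv (G x y - 1)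

theorem guessing_induces_taskEncoder
    {𝒳 𝒴 M : Type*} [Fintype 𝒳] [Fintype 𝒴] [Fintype M]
    [Nonempty 𝒳] [Nonempty 𝒴] [Nonempty M]
    (ρ : ℝ) (hρ : 0 < ρ) (P : 𝒳 → 𝒴 → ℝ) (hP : IsPMF P)
    (G : 𝒳 → 𝒴 → ℕ) (hG : IsGuessing G)
    (v : ℕ) (hv : 0 < v) (hv' : v ≤ Fintype.card 𝒳)
    (hM : v * (Nat.log 2 ((Fintype.card 𝒳 + v - 1) / v) + 1) ≤ Fintype.card M) :
    ∃ f : 𝒳 × 𝒴 → M,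
      ∑ x, ∑ y, P x y *
          ((Finset.univ.filter fun x' => 0 < P x' y ∧ f (x', y) = f (x, y)).card : ℝ) ^ ρ ≤
        ∑ x, ∑ y, P x y * ((⌈(G x y : ℝ) / (v : ℝ)⌉ : ℝ)) ^ ρ :=
  guessing_induces_taskEncoder_general ρ hρ P hP G hG v hv hM
end
end

section
/- Suppose |ℳ| > log|𝒳| + 1 and ⌊|ℳ|/(⌊log|𝒳|⌋+1)⌋ ≤ |𝒳|. Then every guessing function G for X given Y induces a deterministic task-encoder f : 𝒳×𝒴 → ℳ whose lists satisfy E[|L^Y_M|^ρ] ≤ 1 + 2^ρ · E[G(X|Y)^ρ] · ( |ℳ|/(log|𝒳| + 1) − 1 )^{−ρ}. -/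
open Real Finset Filter
open scoped Classical

noncomputable section

/-!
Sort each guess rank `g ∈ [1, n]` into its dyadic chunk `[2 ^ j, 2 ^ (j + 1))`,
`j = ⌊log g⌋ ≤ ⌊log n⌋`, and cut every chunk into `k = ⌊|ℳ| / (⌊log n⌋ + 1)⌋` consecutive blocks
of size `⌊2 ^ j / k⌋ + 1`. The pair (chunk, block) takes at most `(⌊log n⌋ + 1) k ≤ |ℳ|` values
and is the description. Given `y`, a list is contained in the preimage under `G(·|y)` of one
block, so its size is `1` when `2 ^ j < k` and at most `2 · 2 ^ j / k ≤ 2 G(x|y) / k` otherwise.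
Since `k > |ℳ| / (log n + 1) - 1`, taking `ρ`-th powers and averaging over `P` gives the bound.
-/

namespace DyadicCode

def blockSize (k g : ℕ) : ℕ := 2 ^ Nat.log 2 g / k + 1

def slot (k g : ℕ) : ℕ := (g - 2 ^ Nat.log 2 g) / blockSize k g

def label (k g : ℕ) : ℕ := k * Nat.log 2 g + slot k g

variable {k g : ℕ}

lemma blockSize_pos : 0 < blockSize k g := Nat.succ_pos _

lemma slot_lt (hk : 0 < k) (hg : g ≠ 0) : slot k g < k := by
  have hlt : g < 2 * 2 ^ Nat.log 2 g := by
    simpa [pow_succ, mul_comm] using Nat.lt_pow_succ_log_self one_lt_two g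
  have hblock : 2 ^ Nat.log 2 g < k * blockSize k g := by
    rw [blockSize, mul_add_one, mul_comm]
    exact Nat.lt_div_mul_add hk
  rw [slot, Nat.div_lt_iff_lt_mul blockSize_pos]
  have := Nat.pow_log_le_self 2 hg
  omega

lemma label_div (hk : 0 < k) (hg : g ≠ 0) : label k g / k = Nat.log 2 g := by
  rw [label, Nat.mul_add_div hk, Nat.div_eq_of_lt (slot_lt hk hg), add_zero]

lemma label_mod (hk : 0 < k) (hg : g ≠ 0) : label k g % k = slot k g := by
  rw [label, Nat.mul_add_mod, Nat.mod_eq_of_lt (slot_lt hk hg)]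

lemma label_lt (hk : 0 < k) (hg : g ≠ 0) {n : ℕ} (hgn : g ≤ n) :
    label k g < (Nat.log 2 n + 1) * k := by
  have hlog : k * Nat.log 2 g ≤ k * Nat.log 2 n := Nat.mul_le_mul_left k (Nat.log_mono_right hgn)
  have := slot_lt hk hg
  rw [label]
  nlinarith

lemma filter_label_eq_subset (hk : 0 < k) (hg : g ≠ 0) (n : ℕ) :
    (Icc 1 n).filter (fun g' => label k g' = label k g) ⊆
      Ico (2 ^ Nat.log 2 g + blockSize k g * slot k g)
        (2 ^ Nat.log 2 g + blockSize k g * slot k g + blockSize k g) := by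
  intro g' hg'
  obtain ⟨hg'n, heq⟩ := mem_filter.1 hg'
  have hg'0 : g' ≠ 0 := by rw [mem_Icc] at hg'n; omega
  have hlog : Nat.log 2 g' = Nat.log 2 g := by
    rw [← label_div hk hg'0, ← label_div hk hg, heq]
  have hslot : slot k g' = slot k g := by
    rw [← label_mod hk hg'0, ← label_mod hk hg, heq]
  have hpow := Nat.pow_log_le_self 2 hg'0
  have hdiv := Nat.div_add_mod (g' - 2 ^ Nat.log 2 g') (blockSize k g')
  have hmod := Nat.mod_lt (g' - 2 ^ Nat.log 2 g') (blockSize_pos (k := k) (g := g'))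
  simp only [slot, blockSize, hlog] at hslot hdiv hmod hpow ⊢
  rw [hslot] at hdiv
  rw [mem_Ico]
  omega

lemma card_filter_comp_label_eq_le {α : Type*} {ι : ℕ → α} {n : ℕ}
    (hι : Set.InjOn ι (Set.Iio ((Nat.log 2 n + 1) * k))) (hk : 0 < k) (hg : g ∈ Icc 1 n) :
    ((Icc 1 n).filter (fun g' => ι (label k g') = ι (label k g))).card ≤ blockSize k g := by
  have hg0 : g ≠ 0 := by rw [mem_Icc] at hg; omega
  have hlt : ∀ g' ∈ Icc 1 n, label k g' < (Nat.log 2 n + 1) * k := fun g' hg' => by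
    rw [mem_Icc] at hg'
    exact label_lt hk (by omega) hg'.2
  rw [filter_congr fun g' hg' => hι.eq_iff (hlt g' hg') (hlt g hg)]
  simpa using card_le_card (filter_label_eq_subset hk hg0 n)

lemma blockSize_le (hk : 0 < k) (hg : g ≠ 0) :
    (blockSize k g : ℝ) ≤ max 1 (2 * (g : ℝ) / k) := by
  rcases Nat.lt_or_ge (2 ^ Nat.log 2 g) k with hsmall | hlarge
  · simp [blockSize, Nat.div_eq_of_lt hsmall]
  · have hquot : 1 ≤ 2 ^ Nat.log 2 g / k := (Nat.one_le_div_iff hk).2 hlarge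
    have hnat : blockSize k g ≤ 2 * g / k := calc
      blockSize k g ≤ 2 * (2 ^ Nat.log 2 g / k) := by rw [blockSize]; omega
      _ ≤ 2 * (g / k) := Nat.mul_le_mul_left 2 (Nat.div_le_div_right (Nat.pow_log_le_self 2 hg))
      _ ≤ 2 * g / k := Nat.mul_div_le_mul_div_assoc 2 g k
    refine le_max_of_le_right ((Nat.cast_le (α := ℝ)).2 hnat |>.trans ?_)
    simpa using Nat.cast_div_le (α := ℝ) (m := 2 * g) (n := k)

lemma blockSize_rpow_le {ρ c : ℝ} (hρ : 0 ≤ ρ) (hc : 0 < c) (hck : c ≤ k)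
    (hg : g ≠ 0) : (blockSize k g : ℝ) ^ ρ ≤ 1 + 2 ^ ρ * c ^ (-ρ) * (g : ℝ) ^ ρ := by
  have hk : 0 < k := by exact_mod_cast hc.trans_le hck
  calc (blockSize k g : ℝ) ^ ρ ≤ (max 1 (2 * (g : ℝ) / c)) ^ ρ := by
        refine rpow_le_rpow (by positivity) ((blockSize_le hk hg).trans ?_) hρ
        gcongr
    _ ≤ 1 + (2 * (g : ℝ) / c) ^ ρ := by
        rcases max_cases 1 (2 * (g : ℝ) / c) with ⟨hmax, -⟩ | ⟨hmax, -⟩ <;> rw [hmax]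
        · rw [one_rpow]; linarith [rpow_nonneg (by positivity : 0 ≤ 2 * (g : ℝ) / c) ρ]
        · linarith
    _ = 1 + 2 ^ ρ * c ^ (-ρ) * (g : ℝ) ^ ρ := by
        rw [div_rpow (by positivity) hc.le, mul_rpow zero_le_two (Nat.cast_nonneg g),
          rpow_neg hc.le]
        ring

end DyadicCode

lemma IsGuessing.card_filter_and_comp_eq_le {𝒳 W α : Type*} [Fintype 𝒳] {G : 𝒳 → W → ℕ}
    (hG : IsGuessing G) (p : 𝒳 → Prop) (code : ℕ → α) (x : 𝒳) (w : W) :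
    (univ.filter fun x' => p x' ∧ code (G x' w) = code (G x w)).card ≤
      ((Icc 1 (Fintype.card 𝒳)).filter fun g => code g = code (G x w)).card := by
  refine card_le_card_of_injOn (G · w) (fun x' hx' => ?_) (hG w).1.injOn
  rw [mem_coe, mem_filter] at hx' ⊢
  exact ⟨(hG w).2 x', hx'.2.2⟩

lemma IsPMF.sum_mul_le_one_add {𝒳 𝒴 : Type*} [Fintype 𝒳] [Fintype 𝒴] {P : 𝒳 → 𝒴 → ℝ}
    (hP : IsPMF P) {u v : 𝒳 → 𝒴 → ℝ} {a : ℝ} (h : ∀ x y, u x y ≤ 1 + a * v x y) :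
    ∑ x, ∑ y, P x y * u x y ≤ 1 + a * ∑ x, ∑ y, P x y * v x y := calc
  ∑ x, ∑ y, P x y * u x y ≤ ∑ x, ∑ y, P x y * (1 + a * v x y) := by
    gcongr with x _ y _
    exacts [hP.1 x y, h x y]
  _ = 1 + a * ∑ x, ∑ y, P x y * v x y := by
    simp only [mul_add, mul_one, sum_add_distrib, hP.2, mul_sum, mul_left_comm]

lemma div_logb_add_one_sub_one_le_div (m n : ℕ) :
    (m : ℝ) / (logb 2 n + 1) - 1 ≤ (m / (Nat.log 2 n + 1) : ℕ) := by
  have hL : ((Nat.log 2 n + 1 : ℕ) : ℝ) ≤ logb 2 n + 1 := by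
    exact_mod_cast add_le_add_left (natLog_le_logb n 2) 1
  calc (m : ℝ) / (logb 2 n + 1) - 1 ≤ (m : ℝ) / (Nat.log 2 n + 1 : ℕ) - 1 := by
        gcongr
    _ ≤ ⌊(m : ℝ) / (Nat.log 2 n + 1 : ℕ)⌋₊ := (Nat.sub_one_lt_floor _).le
    _ = (m / (Nat.log 2 n + 1) : ℕ) := by rw [Nat.floor_div_eq_div]

theorem guessing_induces_good_taskEncoder_general
    {𝒳 𝒴 M : Type*} [Fintype 𝒳] [Fintype 𝒴] [Fintype M]
    (ρ : ℝ) (hρ : 0 < ρ) (P : 𝒳 → 𝒴 → ℝ) (hP : IsPMF P)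
    (hM : Real.logb 2 (Fintype.card 𝒳) + 1 < (Fintype.card M : ℝ))
    (G : 𝒳 → 𝒴 → ℕ) (hG : IsGuessing G) :
    ∃ f : 𝒳 × 𝒴 → M,
      ∑ x, ∑ y, P x y *
          ((Finset.univ.filter fun x' => 0 < P x' y ∧ f (x', y) = f (x, y)).card : ℝ) ^ ρ ≤
        1 + 2 ^ ρ * (∑ x, ∑ y, P x y * (G x y : ℝ) ^ ρ) *
          ((Fintype.card M : ℝ) / (Real.logb 2 (Fintype.card 𝒳) + 1) - 1) ^ (-ρ) := by
  set n := Fintype.card 𝒳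
  set m := Fintype.card M
  set k := m / (Nat.log 2 n + 1)
  set c := (m : ℝ) / (logb 2 n + 1) - 1
  have hlogb : 0 ≤ logb 2 n := (Nat.cast_nonneg _).trans (natLog_le_logb n 2)
  have hc : 0 < c := sub_pos.2 ((one_lt_div (by linarith)).2 hM)
  have hck : c ≤ k := div_logb_add_one_sub_one_le_div m n
  have hk : 0 < k := by exact_mod_cast hc.trans_le hck
  have hm : 0 < m := by exact_mod_cast (by linarith : (0 : ℝ) < m)
  let ι : ℕ → M := fun i => (Fintype.equivFin M).symm ⟨i % m, Nat.mod_lt i hm⟩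
  have hι : Set.InjOn ι (Set.Iio ((Nat.log 2 n + 1) * k)) := fun i hi j hj hij => by
    have hLk : (Nat.log 2 n + 1) * k ≤ m := Nat.mul_div_le m _
    simpa [Nat.mod_eq_of_lt ((Set.mem_Iio.1 hi).trans_le hLk),
      Nat.mod_eq_of_lt ((Set.mem_Iio.1 hj).trans_le hLk), ι] using hij
  refine ⟨fun p => ι (DyadicCode.label k (G p.1 p.2)), ?_⟩
  have hpoint : ∀ x y,
      ((univ.filter fun x' => 0 < P x' y ∧
          ι (DyadicCode.label k (G x' y)) = ι (DyadicCode.label k (G x y))).card : ℝ) ^ ρ ≤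
        1 + 2 ^ ρ * c ^ (-ρ) * (G x y : ℝ) ^ ρ := fun x y => by
    have hg := (hG y).2 x
    have hcard := (hG.card_filter_and_comp_eq_le (fun x' => 0 < P x' y) _ x y).trans
      (DyadicCode.card_filter_comp_label_eq_le hι hk hg)
    refine (rpow_le_rpow (Nat.cast_nonneg _) (Nat.cast_le.2 hcard) hρ.le).trans ?_
    exact DyadicCode.blockSize_rpow_le hρ.le hc hck (by rw [mem_Icc] at hg; omega)
  calc _ ≤ 1 + 2 ^ ρ * c ^ (-ρ) * ∑ x, ∑ y, P x y * (G x y : ℝ) ^ ρ :=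
        hP.sum_mul_le_one_add hpoint
    _ = _ := by ring

theorem guessing_induces_good_taskEncoder
    {𝒳 𝒴 M : Type*} [Fintype 𝒳] [Fintype 𝒴] [Fintype M]
    [Nonempty 𝒳] [Nonempty 𝒴] [Nonempty M]
    (ρ : ℝ) (hρ : 0 < ρ) (P : 𝒳 → 𝒴 → ℝ) (hP : IsPMF P)
    (hM : Real.logb 2 (Fintype.card 𝒳) + 1 < (Fintype.card M : ℝ))
    (hM' : Fintype.card M / (Nat.log 2 (Fintype.card 𝒳) + 1) ≤ Fintype.card 𝒳)
    (G : 𝒳 → 𝒴 → ℕ) (hG : IsGuessing G) :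
    ∃ f : 𝒳 × 𝒴 → M,
      ∑ x, ∑ y, P x y *
          ((Finset.univ.filter fun x' => 0 < P x' y ∧ f (x', y) = f (x, y)).card : ℝ) ^ ρ ≤
        1 + 2 ^ ρ * (∑ x, ∑ y, P x y * (G x y : ℝ) ^ ρ) *
          ((Fintype.card M : ℝ) / (Real.logb 2 (Fintype.card 𝒳) + 1) - 1) ^ (-ρ) :=
  guessing_induces_good_taskEncoder_general ρ hρ P hP hM G hG
end
end

section
/- Let ℳ be a finite set of size ⌊log|𝒳|⌋ + 1. Then every guessing function G for X given Y induces a deterministic task-encoder f : 𝒳×𝒴 → ℳ whose lists satisfy E[|L^Y_M|^ρ] ≤ E[G(X|Y)^ρ]. -/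
open Real Finset Filter
open scoped Classical

noncomputable section

/-
Encode `(x, y)` by `⌊log₂ G(x|y)⌋ ∈ {0, …, ⌊log₂ |𝒳|⌋}`. Given `y`, the `x` sharing the
description of `x₀` have guesses in `[2^k, 2^(k+1))` with `k = ⌊log₂ G(x₀|y)⌋`, so since
`G(·|y)` is injective the list has at most `2^k ≤ G(x₀|y)` elements. The list sizes are thus
dominated pointwise by the guessing function, and so are their `ρ`-th moments.
-/

theorem Finset.card_filter_log_eq_le_pow {α : Type*} (s : Finset α) (g : α → ℕ)
    (hg : Set.InjOn g s) (hg0 : ∀ a ∈ s, g a ≠ 0) (k : ℕ) :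
    #(s.filter fun a => Nat.log 2 (g a) = k) ≤ 2 ^ k := by
  calc #(s.filter fun a => Nat.log 2 (g a) = k)
      ≤ #(Ico (2 ^ k) (2 ^ (k + 1))) := by
        refine card_le_card_of_injOn g (fun a ha => ?_)
          (hg.mono (coe_subset.2 (filter_subset _ _)))
        obtain ⟨has, rfl⟩ := mem_filter.1 ha
        exact mem_Ico.2 ⟨Nat.pow_log_le_self 2 (hg0 a has), Nat.lt_pow_succ_log_self one_lt_two _⟩
    _ = 2 ^ k := by rw [Nat.card_Ico, pow_succ]; omega

namespace IsGuessing

variable {𝒳 W : Type*} [Fintype 𝒳] {G : 𝒳 → W → ℕ}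

theorem ne_zero (hG : IsGuessing G) (x : 𝒳) (w : W) : G x w ≠ 0 :=
  Nat.one_le_iff_ne_zero.1 (mem_Icc.1 ((hG w).2 x)).1

theorem log_lt (hG : IsGuessing G) (x : 𝒳) (w : W) :
    Nat.log 2 (G x w) < Nat.log 2 (Fintype.card 𝒳) + 1 :=
  Nat.lt_succ_of_le (Nat.log_mono_right (mem_Icc.1 ((hG w).2 x)).2)

theorem card_filter_log_eq_le (hG : IsGuessing G) (x : 𝒳) (w : W) :
    #(univ.filter fun x' => Nat.log 2 (G x' w) = Nat.log 2 (G x w)) ≤ G x w := by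
  calc _ ≤ 2 ^ Nat.log 2 (G x w) :=
        univ.card_filter_log_eq_le_pow _ (hG w).1.injOn (fun x' _ => hG.ne_zero x' w) _
    _ ≤ G x w := Nat.pow_log_le_self 2 (hG.ne_zero x w)

end IsGuessing

theorem guessing_induces_taskEncoder_logCard_general
    {𝒳 𝒴 M : Type*} [Fintype 𝒳] [Fintype 𝒴] [Fintype M]
    (ρ : ℝ) (hρ : 0 < ρ) (P : 𝒳 → 𝒴 → ℝ) (hP : IsPMF P)
    (hM : Fintype.card M = Nat.log 2 (Fintype.card 𝒳) + 1)
    (G : 𝒳 → 𝒴 → ℕ) (hG : IsGuessing G) :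
    ∃ f : 𝒳 × 𝒴 → M,
      ∑ x, ∑ y, P x y *
          ((Finset.univ.filter fun x' => 0 < P x' y ∧ f (x', y) = f (x, y)).card : ℝ) ^ ρ ≤
        ∑ x, ∑ y, P x y * (G x y : ℝ) ^ ρ := by
  let e : M ≃ Fin (Nat.log 2 (Fintype.card 𝒳) + 1) := Fintype.equivFinOfCardEq hM
  let f : 𝒳 × 𝒴 → M := fun p => e.symm ⟨Nat.log 2 (G p.1 p.2), hG.log_lt p.1 p.2⟩
  refine ⟨f, sum_le_sum fun x _ => sum_le_sum fun y _ => ?_⟩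
  have hlist : #(univ.filter fun x' => 0 < P x' y ∧ f (x', y) = f (x, y)) ≤ G x y := by
    refine le_trans (card_le_card fun x' hx' => ?_) (hG.card_filter_log_eq_le x y)
    have hfx' := (mem_filter.1 hx').2.2
    exact mem_filter.2 ⟨mem_univ _, congrArg Fin.val (e.symm.injective hfx')⟩
  have hP0 := hP.1 x y
  gcongr

theorem guessing_induces_taskEncoder_logCard
    {𝒳 𝒴 M : Type*} [Fintype 𝒳] [Fintype 𝒴] [Fintype M]
    [Nonempty 𝒳] [Nonempty 𝒴]
    (ρ : ℝ) (hρ : 0 < ρ) (P : 𝒳 → 𝒴 → ℝ) (hP : IsPMF P)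
    (hM : Fintype.card M = Nat.log 2 (Fintype.card 𝒳) + 1)
    (G : 𝒳 → 𝒴 → ℕ) (hG : IsGuessing G) :
    ∃ f : 𝒳 × 𝒴 → M,
      ∑ x, ∑ y, P x y *
          ((Finset.univ.filter fun x' => 0 < P x' y ∧ f (x', y) = f (x, y)).card : ℝ) ^ ρ ≤
        ∑ x, ∑ y, P x y * (G x y : ℝ) ^ ρ :=
  guessing_induces_taskEncoder_logCard_general ρ hρ P hP hM G hG
end
end

section
/- Let (X,Y,Z) be distributed over the finite set 𝒳×𝒴×𝒵 according to a PMF P. Then min over guessing functions for X given (Y,Z) of E[G(X|Y,Z)^ρ] ≥ E[⌈G*(X|Y)/|𝒵|⌉^ρ], where G* is a guessing function for X given Y minimizing E[G(X|Y)^ρ] (i.e., one that for each y orders the elements of 𝒳 in decreasing order of P_{X,Y}(x,y)). -/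
/-!
Fix a guesser `G` for `X` from `(Y, Z)` and a value `y`, and order `𝒳` by
`m x = min_z G(x | y, z)`. For each `z` at most `k` values of `x` have `G(x | y, z) ≤ k`, so at
most `|𝒵| k` have `m x ≤ k`; the resulting guesser `g` from `Y` alone thus satisfies
`g x ≤ |𝒵| m x ≤ |𝒵| G(x | y, z)`, i.e. `⌈g x / |𝒵|⌉ ≤ G(x | y, z)`.

An optimal `G*` guesses in decreasing order of `P(x, y)`, since otherwise swapping two guesses
would lower its cost. By the rearrangement inequality it then minimises the expectation of every
monotone cost of the guess, in particular of `⌈· / |𝒵|⌉ ^ ρ`, and comparing it with `g` gives the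
bound.
-/

open Real Finset Filter
open scoped Classical

noncomputable section

open Function

-- `IsGuessing G` unfolds to `∀ w, IsRanking (G · w)`.
def IsRanking {𝒳 : Type*} [Fintype 𝒳] (g : 𝒳 → ℕ) : Prop :=
  Injective g ∧ ∀ x, g x ∈ Icc 1 (Fintype.card 𝒳)

namespace IsRanking

variable {𝒳 : Type*} [Fintype 𝒳] {a b : 𝒳 → ℕ}

theorem bijective (ha : IsRanking a) :
    Bijective fun x => (⟨a x, ha.2 x⟩ : Icc 1 (Fintype.card 𝒳)) := by
  rw [Fintype.bijective_iff_injective_and_card, Fintype.card_coe, Nat.card_Icc,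
    Nat.add_sub_cancel]
  exact ⟨fun x y h => ha.1 (congrArg Subtype.val h), rfl⟩

theorem exists_perm_apply_eq (ha : IsRanking a) (hb : IsRanking b) :
    ∃ σ : Equiv.Perm 𝒳, ∀ x, a (σ x) = b x := by
  refine ⟨(Equiv.ofBijective _ hb.bijective).trans (Equiv.ofBijective _ ha.bijective).symm,
    fun x => ?_⟩
  exact congrArg Subtype.val (Equiv.ofBijective_apply_symm_apply _ ha.bijective _)

theorem comp_perm (ha : IsRanking a) (σ : Equiv.Perm 𝒳) : IsRanking (a ∘ σ) :=
  ⟨ha.1.comp σ.injective, fun x => ha.2 (σ x)⟩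

theorem card_filter_apply_le (ha : IsRanking a) (k : ℕ) : #{x | a x ≤ k} ≤ k := by
  calc #{x | a x ≤ k} ≤ #(Icc 1 k) :=
        card_le_card_of_injOn a
          (fun x hx => mem_Icc.2 ⟨(mem_Icc.1 (ha.2 x)).1, (mem_filter.1 hx).2⟩) ha.1.injOn
    _ = k := by simp

theorem sum_mul_le_of_antivary {p : 𝒳 → ℝ} {f : ℕ → ℝ} (hf : Monotone f) (ha : IsRanking a)
    (hb : IsRanking b) (hap : Antivary a p) : ∑ x, p x * f (a x) ≤ ∑ x, p x * f (b x) := by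
  obtain ⟨σ, hσ⟩ := ha.exists_perm_apply_eq hb
  simpa only [comp_apply, hσ] using
    (hap.comp_monotone_left hf).symm.sum_mul_le_sum_mul_comp_perm (σ := σ)

theorem antivary_of_isMinOn {p : 𝒳 → ℝ} {φ : ℕ → ℝ} (hφ : StrictMono φ) (ha : IsRanking a)
    (hmin : IsMinOn (fun b => ∑ x, p x * φ (b x)) {b | IsRanking b} a) : Antivary a p := by
  intro x₁ x₂ hp
  by_contra! hlt
  have hne : x₁ ≠ x₂ := by rintro rfl; exact hp.false
  have hswap := isMinOn_iff.1 hmin _ (ha.comp_perm (Equiv.swap x₁ x₂))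
  have hdiff : ∑ x, p x * φ (a (Equiv.swap x₁ x₂ x)) - ∑ x, p x * φ (a x) =
      (p x₁ - p x₂) * (φ (a x₂) - φ (a x₁)) := by
    rw [← sum_sub_distrib, Fintype.sum_eq_add x₁ x₂ hne fun x hx => by
      rw [Equiv.swap_apply_of_ne_of_ne hx.1 hx.2, sub_self]]
    simp only [Equiv.swap_apply_left, Equiv.swap_apply_right]
    ring
  have := mul_neg_of_neg_of_pos (sub_neg.2 hp) (sub_pos.2 (hφ hlt))
  simp only [comp_apply] at hswap
  linarith

end IsRanking

theorem isRanking_card_filter_le {𝒳 β : Type*} [Fintype 𝒳] [LinearOrder β] {key : 𝒳 → β}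
    (hkey : Injective key) : IsRanking fun x => #{x' | key x' ≤ key x} := by
  have hlt : ∀ {x y}, key x < key y → #{x' | key x' ≤ key x} < #{x' | key x' ≤ key y} := by
    intro x y h
    refine card_lt_card ((ssubset_iff_of_subset fun x' hx' => ?_).2 ⟨y, by simp [h.not_ge]⟩)
    simp only [mem_filter, mem_univ, true_and] at hx' ⊢
    exact hx'.trans h.le
  refine ⟨fun x y hxy => hkey ?_, fun x => mem_Icc.2 ⟨card_pos.2 ⟨x, by simp⟩, card_filter_le _ _⟩⟩
  rcases lt_trichotomy (key x) (key y) with h | h | h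
  · exact absurd hxy (hlt h).ne
  · exact h
  · exact absurd hxy (hlt h).ne'

theorem exists_isRanking_le_card_mul {𝒳 𝒵 : Type*} [Fintype 𝒳] [Fintype 𝒵] [Nonempty 𝒵]
    (G : 𝒵 → 𝒳 → ℕ) (hG : ∀ z, IsRanking (G z)) :
    ∃ g : 𝒳 → ℕ, IsRanking g ∧ ∀ x z, g x ≤ Fintype.card 𝒵 * G z x := by
  set m : 𝒳 → ℕ := fun x => univ.inf' univ_nonempty (G · x)
  have hm : ∀ x, ∃ z, G z x = m x := fun x => by
    obtain ⟨z, -, hz⟩ := exists_mem_eq_inf' univ_nonempty (G · x)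
    exact ⟨z, hz.symm⟩
  have hcount : ∀ k, #{x | m x ≤ k} ≤ Fintype.card 𝒵 * k := fun k => calc
    #{x | m x ≤ k} ≤ #(univ.biUnion fun z => ({x | G z x ≤ k} : Finset 𝒳)) :=
        card_le_card fun x hx => by
          obtain ⟨z, hz⟩ := hm x
          simp only [mem_filter, mem_univ, true_and, mem_biUnion] at hx ⊢
          exact ⟨z, hz ▸ hx⟩
    _ ≤ #(univ : Finset 𝒵) * k :=
        card_biUnion_le_card_mul _ _ _ fun z _ => (hG z).card_filter_apply_le k
    _ = Fintype.card 𝒵 * k := by rw [card_univ]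
  let key : 𝒳 → ℕ ×ₗ Fin (Fintype.card 𝒳) := fun x => toLex (m x, Fintype.equivFin 𝒳 x)
  have hkey : Injective key := fun x y h =>
    (Fintype.equivFin 𝒳).injective (congrArg Prod.snd (toLex.injective h))
  refine ⟨_, isRanking_card_filter_le hkey, fun x z => ?_⟩
  calc #{x' | key x' ≤ key x} ≤ #{x' | m x' ≤ m x} :=
        card_le_card fun x' hx' => by
          simp only [mem_filter, mem_univ, true_and] at hx' ⊢
          exact Prod.Lex.monotone_fst _ _ hx'
    _ ≤ Fintype.card 𝒵 * m x := hcount _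
    _ ≤ Fintype.card 𝒵 * G z x := Nat.mul_le_mul_left _ (inf'_le _ (mem_univ z))

theorem IsGuessing.isMinOn_slice {𝒳 𝒴 : Type*} [Fintype 𝒳] [Fintype 𝒴]
    {S : 𝒴 → (𝒳 → ℕ) → ℝ} {G : 𝒳 → 𝒴 → ℕ} (hG : IsGuessing G)
    (hmin : IsMinOn (fun G' : 𝒳 → 𝒴 → ℕ => ∑ y, S y (G' · y)) {G' | IsGuessing G'} G)
    (y : 𝒴) : IsMinOn (S y) {b | IsRanking b} (G · y) := by
  refine isMinOn_iff.2 fun b hb => ?_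
  set G' : 𝒳 → 𝒴 → ℕ := fun x => update (G x) y (b x)
  have hG' : IsGuessing G' := fun w => by
    rcases eq_or_ne w y with rfl | hw
    · simp only [G', update_self]
      exact hb
    · simpa [G', hw] using hG w
  have hrest : ∑ y' ∈ {y}ᶜ, S y' (G' · y') = ∑ y' ∈ {y}ᶜ, S y' (G · y') :=
    sum_congr rfl fun y' hy' => by
      simp [G', update_of_ne (show y' ≠ y by simpa using hy')]
  have h := isMinOn_iff.1 hmin G' hG'
  rw [Fintype.sum_eq_add_sum_compl y, Fintype.sum_eq_add_sum_compl y, hrest] at h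
  simpa [G'] using h

theorem sum_sum_sum_mul_eq_sum_sum_marginal_mul {ι κ μ R : Type*} [Fintype ι] [Fintype κ]
    [Fintype μ] [NonUnitalNonAssocSemiring R] (P : ι → κ → μ → R) (C : ι → κ → R) :
    ∑ x, ∑ y, ∑ z, P x y z * C x y = ∑ y, ∑ x, (∑ z, P x y z) * C x y := by
  rw [sum_comm]
  simp_rw [sum_mul]

theorem ceil_div_le_of_le_mul {a n m : ℕ} (hn : 0 < n) (h : a ≤ n * m) :
    ⌈(a : ℝ) / n⌉ ≤ m := by
  rw [Int.ceil_le, div_le_iff₀ (Nat.cast_pos.2 hn)]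
  exact_mod_cast h.trans_eq (mul_comm n m)

theorem sideInfo_improves_guessing_lower_bound_general
    {𝒳 𝒴 𝒵 : Type*} [Fintype 𝒳] [Fintype 𝒴] [Fintype 𝒵]
    [Nonempty 𝒵]
    (ρ : ℝ) (hρ : 0 < ρ) (P : 𝒳 → 𝒴 → 𝒵 → ℝ)
    (hP : (∀ x y z, 0 ≤ P x y z) ∧ ∑ x, ∑ y, ∑ z, P x y z = 1)
    (Gopt : 𝒳 → 𝒴 → ℕ) (hGopt : IsGuessing Gopt)
    (hGoptMin : ∀ G' : 𝒳 → 𝒴 → ℕ, IsGuessing G' →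
      ∑ x, ∑ y, ∑ z, P x y z * (Gopt x y : ℝ) ^ ρ ≤
        ∑ x, ∑ y, ∑ z, P x y z * (G' x y : ℝ) ^ ρ) :
    ∀ G : 𝒳 → 𝒴 × 𝒵 → ℕ, IsGuessing G →
      ∑ x, ∑ y, ∑ z, P x y z *
          ((⌈(Gopt x y : ℝ) / (Fintype.card 𝒵 : ℝ)⌉ : ℝ)) ^ ρ ≤
        ∑ x, ∑ y, ∑ z, P x y z * (G x (y, z) : ℝ) ^ ρ := by
  intro G hG
  let f : ℕ → ℝ := fun k => ((⌈(k : ℝ) / (Fintype.card 𝒵 : ℝ)⌉ : ℤ) : ℝ) ^ ρ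
  have hf : Monotone f := fun k l hkl => by
    simp only [f]
    gcongr
  have hGoptMinOn : IsMinOn (fun G' : 𝒳 → 𝒴 → ℕ => ∑ y, ∑ x, (∑ z, P x y z) * (G' x y : ℝ) ^ ρ)
      {G' | IsGuessing G'} Gopt :=
    isMinOn_iff.2 fun G' hG' => by
      simpa only [sum_sum_sum_mul_eq_sum_sum_marginal_mul] using hGoptMin G' hG'
  have hGoptRank : ∀ y, IsRanking (Gopt · y) := hGopt
  have hanti : ∀ y, Antivary (Gopt · y) (∑ z, P · y z) := fun y =>
    (hGoptRank y).antivary_of_isMinOn (φ := fun k => (k : ℝ) ^ ρ)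
      (fun k l hkl => rpow_lt_rpow k.cast_nonneg (Nat.cast_lt.2 hkl) hρ)
      (hGopt.isMinOn_slice (S := fun y b => ∑ x, (∑ z, P x y z) * (b x : ℝ) ^ ρ) hGoptMinOn y)
  choose g hg hgG using fun y =>
    exists_isRanking_le_card_mul (fun z x => G x (y, z)) fun z => hG (y, z)
  calc ∑ x, ∑ y, ∑ z, P x y z * f (Gopt x y)
      = ∑ y, ∑ x, (∑ z, P x y z) * f (Gopt x y) := sum_sum_sum_mul_eq_sum_sum_marginal_mul _ _
    _ ≤ ∑ y, ∑ x, (∑ z, P x y z) * f (g y x) :=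
        sum_le_sum fun y _ => (hGoptRank y).sum_mul_le_of_antivary hf (hg y) (hanti y)
    _ = ∑ x, ∑ y, ∑ z, P x y z * f (g y x) := (sum_sum_sum_mul_eq_sum_sum_marginal_mul _ _).symm
    _ ≤ ∑ x, ∑ y, ∑ z, P x y z * (G x (y, z) : ℝ) ^ ρ := by
        gcongr with x _ y _ z _
        · exact hP.1 x y z
        · exact rpow_le_rpow (by positivity)
            (by exact_mod_cast ceil_div_le_of_le_mul Fintype.card_pos (hgG y x z)) hρ.le

theorem sideInfo_improves_guessing_lower_bound
    {𝒳 𝒴 𝒵 : Type*} [Fintype 𝒳] [Fintype 𝒴] [Fintype 𝒵]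
    [Nonempty 𝒳] [Nonempty 𝒴] [Nonempty 𝒵]
    (ρ : ℝ) (hρ : 0 < ρ) (P : 𝒳 → 𝒴 → 𝒵 → ℝ)
    (hP : (∀ x y z, 0 ≤ P x y z) ∧ ∑ x, ∑ y, ∑ z, P x y z = 1)
    (Gopt : 𝒳 → 𝒴 → ℕ) (hGopt : IsGuessing Gopt)
    (hGoptMin : ∀ G' : 𝒳 → 𝒴 → ℕ, IsGuessing G' →
      ∑ x, ∑ y, ∑ z, P x y z * (Gopt x y : ℝ) ^ ρ ≤
        ∑ x, ∑ y, ∑ z, P x y z * (G' x y : ℝ) ^ ρ) :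
    ∀ G : 𝒳 → 𝒴 × 𝒵 → ℕ, IsGuessing G →
      ∑ x, ∑ y, ∑ z, P x y z *
          ((⌈(Gopt x y : ℝ) / (Fintype.card 𝒵 : ℝ)⌉ : ℝ)) ^ ρ ≤
        ∑ x, ∑ y, ∑ z, P x y z * (G x (y, z) : ℝ) ^ ρ :=
  sideInfo_improves_guessing_lower_bound_general ρ hρ P hP Gopt hGopt hGoptMin
end
end
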